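/- arXiv:alg-geom/9604010 — 3 statements merged into one kernel-verified Lean document; each statement's English description precedes it below -/
import Mathlib

section
/- Let G be a group, N ≥ 3, and Γ_N = {(g_1,...,g_N; σ) ∈ G^N ⋊ Σ_N : g_1⋯g_N ∈ Γ} where Γ ≤ G is a normal subgroup containing [G,G]. Then the commutator subgroup of Γ_N equals {(g_1,...,g_N; σ) ∈ G^N ⋊ A_N : g_1⋯g_N ∈ [G,G]}, where A_N ⊂ Σ_N is the alternating group. -/
/-- The action of the symmetric group on `Fin N → G` by permuting coordinates. -/
def permAut (G : Type*) [Group G] (N : ℕ) :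
    Equiv.Perm (Fin N) →* MulAut (Fin N → G) where
  toFun σ :=
    { toEquiv := Equiv.arrowCongr σ (Equiv.refl G)
      map_mul' := fun _ _ => rfl }
  map_one' := by ext f x; rfl
  map_mul' := fun σ τ => by ext f x; rfl

/-- The wreath product `G^N ⋊ Σ_N`. -/
abbrev Wr (G : Type*) [Group G] (N : ℕ) :=
  SemidirectProduct (Fin N → G) (Equiv.Perm (Fin N)) (permAut G N)

open Equiv Equiv.Perm SemidirectProduct Subgroup
open scoped commutatorElement

theorem threeCycle_isCommutator {α : Type*} [DecidableEq α] [Fintype α]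
    {g : Perm α} (hg : g.IsThreeCycle) : ∃ a b : Perm α, g = ⁅a, b⁆ := by
  have hh : IsThreeCycle (g * g) := hg.isThreeCycle_sq
  have hg3 : g ^ 3 = 1 := by rw [← hg.orderOf]; exact pow_orderOf_eq_one g
  have hgh : (g * g) * (g * g) = g := by
    have h4 : g ^ 4 = g := by
      rw [show (4 : ℕ) = 3 + 1 from rfl, pow_succ, hg3, one_mul]
    rw [show (g * g) * (g * g) = g ^ 4 by rw [show (4:ℕ) = 2+2 from rfl, pow_add, pow_two]]
    exact h4
  have h3 : (g * g) ^ 3 = 1 := by rw [← hh.orderOf]; exact pow_orderOf_eq_one (g*g)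
  obtain ⟨a, ha⟩ : ∃ a, (g * g) a ≠ a := by
    have hcard := hh.card_support
    have : (g * g).support.Nonempty := Finset.card_pos.1 (by omega)
    obtain ⟨a, ha⟩ := this
    exact ⟨a, Equiv.Perm.mem_support.1 ha⟩
  obtain ⟨b, hb⟩ : ∃ b, (g * g) a = b := ⟨_, rfl⟩
  obtain ⟨c, hc⟩ : ∃ c, (g * g) b = c := ⟨_, rfl⟩
  have hba : b ≠ a := hb ▸ ha
  have hcb : c ≠ b := by
    rw [← hc]
    have hbmem : b ∈ (g * g).support := by
      rw [← hb]
      exact Equiv.Perm.apply_mem_support.2 (Equiv.Perm.mem_support.2 ha)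
    exact Equiv.Perm.mem_support.1 hbmem
  have hhc : (g * g) c = a := by
    have h1 : ((g * g) ^ 3) a = a := by rw [h3]; rfl
    have e : (g * g) ((g * g) ((g * g) a)) = a := by
      simpa [pow_succ, Equiv.Perm.mul_apply] using h1
    rw [hb, hc] at e
    exact e
  have hca : c ≠ a := fun h' => ha (h' ▸ hhc)
  have hsupp : (g * g).support = {a, b, c} := by
    symm
    apply Finset.eq_of_subset_of_card_le
    · intro t ht
      simp only [Finset.mem_insert, Finset.mem_singleton] at ht
      rcases ht with rfl | rfl | rfl
      · exact Equiv.Perm.mem_support.2 ha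
      · exact Equiv.Perm.mem_support.2 (by rw [hc]; exact hcb)
      · exact Equiv.Perm.mem_support.2 (by rw [hhc]; exact hca.symm)
    · rw [hh.card_support]
      rw [Finset.card_insert_of_notMem (by simp [hba.symm, hca.symm]),
        Finset.card_insert_of_notMem (by simp [hcb.symm]), Finset.card_singleton]
  have hswap : g * g = swap a c * swap a b := by
    ext t
    simp only [Equiv.Perm.mul_apply]
    by_cases h1 : t = a
    · subst h1
      rw [swap_apply_left, swap_apply_of_ne_of_ne hba hcb.symm, ← Equiv.Perm.mul_apply, hb]
    by_cases h2 : t = b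
    · subst h2
      rw [swap_apply_right, swap_apply_left, ← Equiv.Perm.mul_apply, hc]
    by_cases h3 : t = c
    · subst h3
      rw [swap_apply_of_ne_of_ne hca hcb, swap_apply_right, ← Equiv.Perm.mul_apply, hhc]
    · have ht : t ∉ (g * g).support := by simp [hsupp, h1, h2, h3]
      rw [swap_apply_of_ne_of_ne h1 h2, swap_apply_of_ne_of_ne h1 h3, ← Equiv.Perm.mul_apply,
        Equiv.Perm.notMem_support.1 ht]
  refine ⟨swap a c, swap a b, ?_⟩
  rw [commutatorElement_def, swap_inv, swap_inv, show swap a c * swap a b * swap a c * swap a b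
    = (swap a c * swap a b) * (swap a c * swap a b) by group, ← hswap, hgh]

theorem alt_le_commutator {α : Type*} [DecidableEq α] [Fintype α] :
    (alternatingGroup α) ≤ ⁅(⊤ : Subgroup (Perm α)), (⊤ : Subgroup (Perm α))⁆ := by
  rw [← Equiv.Perm.closure_three_cycles_eq_alternating]
  refine (Subgroup.closure_le _).2 ?_
  rintro g hg
  obtain ⟨a, b, rfl⟩ := threeCycle_isCommutator hg
  exact Subgroup.commutator_mem_commutator (Subgroup.mem_top a) (Subgroup.mem_top b)


section helpers

variable {G : Type*} [Group G] {N : ℕ}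

theorem permAut_apply (σ : Perm (Fin N)) (f : Fin N → G) (i : Fin N) :
    permAut G N σ f i = f (σ.symm i) := rfl

theorem permAut_mulSingle (σ : Perm (Fin N)) (i : Fin N) (a : G) :
    permAut G N σ (Pi.mulSingle i a) = Pi.mulSingle (σ i) a := by
  funext j
  rw [permAut_apply]
  by_cases hj : j = σ i
  · subst hj
    rw [Equiv.symm_apply_apply]
    simp
  · rw [Pi.mulSingle_apply, Pi.mulSingle_apply, if_neg, if_neg hj]
    intro hc
    exact hj (by rw [← hc]; simp)

/-- The "abelianized product of coordinates" homomorphism. -/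
def abProd (G : Type*) [Group G] (N : ℕ) : Wr G N →* Abelianization G where
  toFun z := ∏ i, Abelianization.of (z.left i)
  map_one' := by simp
  map_mul' z w := by
    show (∏ i, Abelianization.of ((z.left * permAut G N z.right w.left) i)) = _
    simp only [Pi.mul_apply, map_mul, Finset.prod_mul_distrib]
    congr 1
    simp only [permAut_apply]
    exact Equiv.prod_comp z.right.symm fun i => Abelianization.of (w.left i)

theorem ofProd (f : Fin N → G) :
    Abelianization.of (List.ofFn f).prod = ∏ i, Abelianization.of (f i) := by
  rw [map_list_prod, List.map_ofFn, List.prod_ofFn]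
  rfl

theorem ker_ab (u : G) : Abelianization.of u = 1 ↔ u ∈ commutator G :=
  QuotientGroup.eq_one_iff u

theorem singleProd (i : Fin N) (a : G) :
    ∏ t, Abelianization.of ((Pi.mulSingle i a : Fin N → G) t) = Abelianization.of a := by
  rw [Finset.prod_eq_single i]
  · simp
  · intro t _ ht
    simp [Pi.mulSingle_apply, ht]
  · simp

end helpers

/-- For `N ≥ 3` and `Γ_N = {(g;σ) : g_1 ⋯ g_N ∈ Γ}` (with `[G,G] ≤ Γ ⊴ G`), the
commutator subgroup of `Γ_N` is `{(g;σ) ∈ G^N ⋊ A_N : g_1 ⋯ g_N ∈ [G,G]}`. -/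
theorem stmt3 (G : Type*) [Group G] (Γ : Subgroup G) [Γ.Normal]
    (hΓ : commutator G ≤ Γ) (N : ℕ) (hN : 3 ≤ N)
    (H : Subgroup (Wr G N))
    (hH : ∀ x : Wr G N, x ∈ H ↔ (List.ofFn x.left).prod ∈ Γ) :
    ∀ x : Wr G N,
      x ∈ (⁅H, H⁆ : Subgroup (Wr G N)) ↔
        x.right ∈ alternatingGroup (Fin N) ∧
          (List.ofFn x.left).prod ∈ commutator G := by
  intro x
  constructor
  · intro hx
    have hsign : ⁅H, H⁆ ≤ MonoidHom.ker (Equiv.Perm.sign.comp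
        (rightHom : Wr G N →* Perm (Fin N))) := by
      rw [Subgroup.commutator_le]
      intro g _ h _
      rw [MonoidHom.mem_ker, map_commutatorElement]
      exact commutatorElement_eq_one_iff_commute.mpr (mul_comm _ _)
    have hab : ⁅H, H⁆ ≤ MonoidHom.ker (abProd G N) := by
      rw [Subgroup.commutator_le]
      intro g _ h _
      rw [MonoidHom.mem_ker, map_commutatorElement]
      exact commutatorElement_eq_one_iff_commute.mpr (mul_comm _ _)
    constructor
    · rw [Equiv.Perm.mem_alternatingGroup]
      exact hsign hx
    · rw [← ker_ab, ofProd]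
      exact hab hx
  · rintro ⟨hσ, hg⟩
    -- basic membership facts
    have hinrH : ∀ σ : Perm (Fin N), inr σ ∈ H := by
      intro σ
      rw [hH]
      have : (inr σ : Wr G N).left = fun _ => (1 : G) := rfl
      rw [this]
      simp only [List.ofFn_const, List.prod_replicate, one_pow]
      exact one_mem Γ
    have pairH : ∀ (i j : Fin N), i ≠ j → ∀ a : G,
        inl (Pi.mulSingle i a * Pi.mulSingle j a⁻¹) ∈ H := by
      intro i j hij a
      rw [hH]
      apply hΓ
      rw [← ker_ab]
      have : (inl (Pi.mulSingle i a * Pi.mulSingle j a⁻¹) : Wr G N).left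
          = Pi.mulSingle i a * Pi.mulSingle j a⁻¹ := rfl
      rw [this, ofProd]
      simp only [Pi.mul_apply, map_mul, Finset.prod_mul_distrib, singleProd]
      simp
    -- existence of fresh indices
    have hfresh : ∀ s : Finset (Fin N), s.card < 3 → ∃ i, i ∉ s := by
      intro s hs
      by_contra hc
      push_neg at hc
      have : (Finset.univ : Finset (Fin N)).card ≤ s.card :=
        Finset.card_le_card fun i _ => hc i
      rw [Finset.card_univ, Fintype.card_fin] at this
      omega
    -- elementary pair elements are in the commutator subgroup
    have pairD : ∀ (j k : Fin N), j ≠ k → ∀ a : G,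
        inl (Pi.mulSingle j a * Pi.mulSingle k a⁻¹) ∈ ⁅H, H⁆ := by
      intro j k hjk a
      obtain ⟨i, hi⟩ := hfresh {j, k} (by
        refine lt_of_le_of_lt (Finset.card_insert_le _ _) ?_
        simp)
      simp only [Finset.mem_insert, Finset.mem_singleton, not_or] at hi
      obtain ⟨hij, hik⟩ := hi
      set u : Fin N → G := Pi.mulSingle i a⁻¹ * Pi.mulSingle j a with hu
      have huH : inl u ∈ H := by
        have := pairH i j hij a⁻¹
        rwa [inv_inv] at this
      have hcomm : ⁅(inl u : Wr G N), (inr (Equiv.swap j k) : Wr G N)⁆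
          = (inl (Pi.mulSingle j a * Pi.mulSingle k a⁻¹) : Wr G N) := by
        rw [commutatorElement_def]
        have h1 : (inl u : Wr G N)⁻¹ = inl u⁻¹ := by rw [map_inv]
        have h2 : (inr (Equiv.swap j k) : Wr G N)⁻¹ = inr (Equiv.swap j k)⁻¹ := by
          rw [map_inv]
        rw [h1, h2, mul_assoc, mul_assoc, ← mul_assoc (inr (Equiv.swap j k)) (inl u⁻¹), ← inl_aut, ← map_mul]
        congr 1
        have haut : permAut G N (Equiv.swap j k) u⁻¹
            = Pi.mulSingle i a * Pi.mulSingle k a⁻¹ := by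
          rw [hu, mul_inv_rev, map_mul, ← Pi.mulSingle_inv, ← Pi.mulSingle_inv,
            permAut_mulSingle, permAut_mulSingle, inv_inv,
            Equiv.swap_apply_left, Equiv.swap_apply_of_ne_of_ne hij hik]
          funext t
          simp only [Pi.mul_apply, Pi.mulSingle_apply]
          by_cases h1 : t = i <;> by_cases h3 : t = k <;> simp_all
        rw [haut, hu]
        funext t
        simp only [Pi.mul_apply, Pi.mulSingle_apply]
        by_cases h1 : t = i <;> by_cases h2 : t = j <;> by_cases h3 : t = k <;>
          simp_all
      rw [← hcomm]
      exact Subgroup.commutator_mem_commutator huH (hinrH _)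
    -- single-coordinate commutators are in the commutator subgroup
    have commD : ∀ (i : Fin N) (a b : G),
        inl (Pi.mulSingle i ⁅a, b⁆) ∈ ⁅H, H⁆ := by
      intro i a b
      obtain ⟨j, hj⟩ := hfresh {i} (by simp)
      simp only [Finset.mem_singleton] at hj
      obtain ⟨k, hk⟩ := hfresh {i, j} (by
        refine lt_of_le_of_lt (Finset.card_insert_le _ _) ?_
        simp)
      simp only [Finset.mem_insert, Finset.mem_singleton, not_or] at hk
      obtain ⟨hki, hkj⟩ := hk
      have hx := pairH i j (Ne.symm hj) a
      have hy := pairH i k (Ne.symm hki) b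
      have := Subgroup.commutator_mem_commutator hx hy
      rw [← map_commutatorElement] at this
      convert this using 2
      funext t
      simp only [commutatorElement_def, Pi.mul_apply, Pi.inv_apply, Pi.mulSingle_apply]
      by_cases h1 : t = i <;> by_cases h2 : t = j <;> by_cases h3 : t = k <;>
        simp_all
    -- all single coordinates with value in the commutator subgroup of G
    have singleCommD : ∀ (i : Fin N) (c : G), c ∈ commutator G →
        inl (Pi.mulSingle i c) ∈ ⁅H, H⁆ := by
      intro i c hc
      have hle : commutator G ≤ Subgroup.comap
          ((inl : (Fin N → G) →* Wr G N).comp (MonoidHom.mulSingle (fun _ : Fin N => G) i))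
          ⁅H, H⁆ := by
        rw [_root_.commutator_def, Subgroup.commutator_le]
        intro a _ b _
        rw [Subgroup.mem_comap]
        show inl (Pi.mulSingle i ⁅a, b⁆) ∈ ⁅H, H⁆
        exact commD i a b
      exact hle hc
    -- main induction: elements of the base group with product in [G,G]
    have main : ∀ (d : ℕ) (f : Fin N → G), (∀ i : Fin N, (i : ℕ) < N - 1 - d → f i = 1) →
        (List.ofFn f).prod ∈ _root_.commutator G → (inl f : Wr G N) ∈ ⁅H, H⁆ := by
      intro d
      induction d with
      | zero =>
        intro f hsupp hprod
        have hlast : (N - 1 : ℕ) < N := by omega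
        have hf : f = Pi.mulSingle (⟨N - 1, hlast⟩ : Fin N) (f ⟨N - 1, hlast⟩) := by
          funext t
          by_cases ht : t = (⟨N - 1, hlast⟩ : Fin N)
          · subst ht; simp
          · rw [Pi.mulSingle_apply, if_neg ht, hsupp t ?_]
            have h1 : (t : ℕ) < N := t.isLt
            have h2 : (t : ℕ) ≠ N - 1 := fun hc => ht (Fin.ext hc)
            omega
        have hcm : f ⟨N - 1, hlast⟩ ∈ _root_.commutator G := by
          rw [← ker_ab]
          have h0 := (ker_ab _).2 hprod
          rw [ofProd] at h0
          rw [← h0]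
          conv_rhs => rw [hf]
          rw [singleProd]
        rw [hf]
        exact singleCommD _ _ hcm
      | succ d ih =>
        intro f hsupp hprod
        by_cases hd : N - 1 - d = N - 1 - (d + 1)
        · exact ih f (fun i hi => hsupp i (by omega)) hprod
        have hklt : N - 1 - (d + 1) < N := by omega
        have hk'lt : N - 1 - d < N := by omega
        obtain ⟨k, hkv⟩ : ∃ k : Fin N, (k : ℕ) = N - 1 - (d + 1) := ⟨⟨_, hklt⟩, rfl⟩
        obtain ⟨k', hk'v⟩ : ∃ k' : Fin N, (k' : ℕ) = N - 1 - d := ⟨⟨_, hk'lt⟩, rfl⟩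
        have hkk' : k ≠ k' := by
          intro hc
          apply hd
          rw [← hkv, ← hk'v, hc]
        set f' : Fin N → G := fun t => if t = k then 1 else if t = k' then f k * f k' else f t
          with hf'
        have hff : f = (Pi.mulSingle k (f k) * Pi.mulSingle k' (f k)⁻¹) * f' := by
          funext t
          simp only [hf', Pi.mul_apply, Pi.mulSingle_apply]
          by_cases h1 : t = k
          · subst h1
            simp [hkk']
          · by_cases h2 : t = k'
            · subst h2
              simp [h1]
            · simp [h1, h2]
        have hsupp' : ∀ i : Fin N, (i : ℕ) < N - 1 - d → f' i = 1 := by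
          intro i hi
          simp only [hf']
          by_cases h1 : i = k
          · simp [h1]
          · rw [if_neg h1, if_neg, hsupp i ?_]
            · have : (i : ℕ) ≠ N - 1 - (d + 1) := by
                intro hval
                exact h1 (Fin.ext (by rw [hkv]; exact hval))
              omega
            · intro hc
              rw [hc, hk'v] at hi
              omega
        have key : (∏ t, Abelianization.of (f' t)) = ∏ t, Abelianization.of (f t) := by
          calc (∏ t, Abelianization.of (f' t))
              = ∏ t, (Abelianization.of (f t) *
                ((if t = k then (Abelianization.of (f k))⁻¹ else 1) *
                 (if t = k' then Abelianization.of (f k) else 1))) := by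
                refine Finset.prod_congr rfl fun t _ => ?_
                simp only [hf']
                by_cases h1 : t = k
                · simp [h1, hkk']
                · by_cases h2 : t = k'
                  · simp [h1, h2, Ne.symm hkk', map_mul, mul_comm]
                  · simp [h1, h2]
            _ = (∏ t, Abelianization.of (f t)) *
                (((Abelianization.of (f k))⁻¹) * Abelianization.of (f k)) := by
                rw [Finset.prod_mul_distrib, Finset.prod_mul_distrib,
                  Finset.prod_ite_eq', Finset.prod_ite_eq']
                simp
            _ = ∏ t, Abelianization.of (f t) := by simp
        have hprod' : (List.ofFn f').prod ∈ _root_.commutator G := by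
          rw [← ker_ab, ofProd, key, ← ofProd, ker_ab]
          exact hprod
        rw [hff, map_mul]
        exact mul_mem (pairD k k' hkk' (f k)) (ih f' hsupp' hprod')
    have hinl : (inl x.left : Wr G N) ∈ ⁅H, H⁆ :=
      main N x.left (fun i hi => absurd hi (by omega)) hg
    have hinr : (inr x.right : Wr G N) ∈ ⁅H, H⁆ := by
      have h1 : x.right ∈ ⁅(⊤ : Subgroup (Perm (Fin N))), (⊤ : Subgroup (Perm (Fin N)))⁆ :=
        alt_le_commutator hσ
      have h2 : Subgroup.map (inr : Perm (Fin N) →* Wr G N)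
          ⁅(⊤ : Subgroup (Perm (Fin N))), (⊤ : Subgroup (Perm (Fin N)))⁆ ≤ ⁅H, H⁆ := by
        rw [Subgroup.map_commutator]
        refine Subgroup.commutator_mono ?_ ?_ <;>
          · rintro z ⟨σ', -, rfl⟩
            exact hinrH σ'
      exact h2 ⟨x.right, h1, rfl⟩
    rw [← inl_left_mul_inr_right x]
    exact mul_mem hinl hinr
end

section
/- Let G be a group with abelianization H = G^{ab}, let Γ be the kernel of the composite map G → H → H/tor(H) (where tor(H) is the torsion subgroup of H), and for N ≥ 3 let Γ_N = {(g_1,...,g_N; σ) ∈ G^N ⋊ Σ_N : g_1⋯g_N ∈ Γ}. Then the abelianization of Γ_N is isomorphic to tor(H) × Z/2Z. -/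
def signHom2 : ℤˣ →* Multiplicative (ZMod 2) where
  toFun u := if u = 1 then 1 else Multiplicative.ofAdd 1
  map_one' := if_pos rfl
  map_mul' := by decide

lemma signHom2_eq_one_iff : ∀ u : ℤˣ, signHom2 u = 1 ↔ u = 1 := by decide

lemma signHom2_neg_one : signHom2 (-1) = Multiplicative.ofAdd 1 := by decide

lemma multZMod2_cases : ∀ z : Multiplicative (ZMod 2), z = 1 ∨ z = Multiplicative.ofAdd 1 := by
  decide

section Aux

variable {G : Type*} [Group G] {N : ℕ}

/-- the coordinate-product map to the abelianization -/
def prodAb (G : Type*) [Group G] (N : ℕ) : Wr G N →* Abelianization G where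
  toFun w := ∏ i, Abelianization.of (w.left i)
  map_one' := by simp [SemidirectProduct.one_left]
  map_mul' x y := by
    simp only [SemidirectProduct.mul_left, Pi.mul_apply, map_mul, Finset.prod_mul_distrib]
    congr 1
    exact Equiv.prod_comp x.right.symm fun i => Abelianization.of (y.left i)

lemma prodAb_inl (f : Fin N → G) :
    prodAb G N (SemidirectProduct.inl f) = ∏ i, Abelianization.of (f i) := rfl

lemma prodAb_inr (σ : Equiv.Perm (Fin N)) : prodAb G N (SemidirectProduct.inr σ) = 1 := by
  simp [prodAb, SemidirectProduct.left_inr]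

end Aux

open scoped commutatorElement

/-- Let `H = G^{ab}` be finitely generated, `Γ = ker(G → H/tor H)`, `N ≥ 3`, and
`Γ_N = {(g;σ) ∈ G^N ⋊ Σ_N : g_1 ⋯ g_N ∈ Γ}`. Then the abelianization of `Γ_N` is
isomorphic to `tor(H) × ℤ/2ℤ`. -/
theorem stmt4 (G : Type*) [Group G] (hfg : Group.FG (Abelianization G))
    (N : ℕ) (hN : 3 ≤ N)
    (H : Subgroup (Wr G N))
    (hH : ∀ x : Wr G N, x ∈ H ↔
      (List.ofFn x.left).prod ∈
        (((QuotientGroup.mk' (CommGroup.torsion (Abelianization G))).comp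
          Abelianization.of).ker)) :
    Nonempty (Abelianization H ≃*
      CommGroup.torsion (Abelianization G) × Multiplicative (ZMod 2)) := by
  classical
  set T : Subgroup (Abelianization G) := CommGroup.torsion (Abelianization G) with hT
  set F : G →* (Abelianization G) ⧸ T :=
    ((QuotientGroup.mk' T).comp Abelianization.of) with hF
  -- membership criterion in terms of finite products
  have hH' : ∀ x : Wr G N, x ∈ H ↔ (∏ i, F (x.left i)) = 1 := by
    intro x
    rw [hH x, MonoidHom.mem_ker, map_list_prod, List.map_ofFn, List.prod_ofFn]
    rfl
  -- the torsion-valued component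
  have hmemT : ∀ x : H, prodAb G N (x : Wr G N) ∈ T := by
    intro x
    have hx := (hH' x).1 x.2
    have : QuotientGroup.mk' T (prodAb G N (x : Wr G N)) = 1 := by
      show QuotientGroup.mk' T (∏ i, Abelianization.of ((x : Wr G N).left i)) = 1
      rw [map_prod]
      exact hx
    rwa [← QuotientGroup.ker_mk' T, MonoidHom.mem_ker]
  set ψ : H →* T × Multiplicative (ZMod 2) :=
    (((prodAb G N).comp H.subtype).codRestrict T hmemT).prod
      (signHom2.comp (Equiv.Perm.sign.comp (SemidirectProduct.rightHom.comp H.subtype)))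
      with hψ
  obtain ⟨i0, i1, i2, hv0, h01, h02, h12⟩ :
      ∃ i0 i1 i2 : Fin N, (i0 : ℕ) = 0 ∧ i0 ≠ i1 ∧ i0 ≠ i2 ∧ i1 ≠ i2 :=
    ⟨⟨0, by omega⟩, ⟨1, by omega⟩, ⟨2, by omega⟩, rfl, by simp [Fin.ext_iff], by
      simp [Fin.ext_iff], by simp [Fin.ext_iff]⟩
  have hofsingle : ∀ (i : Fin N) (a : G),
      (∏ k, Abelianization.of ((Pi.mulSingle i a : Fin N → G) k)) = Abelianization.of a := by
    intro i a
    refine (Fintype.prod_eq_single i ?_).trans (by rw [Pi.mulSingle_eq_same])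
    intro k hk
    rw [Pi.mulSingle_eq_of_ne hk, map_one]
  have hFsingle : ∀ (i : Fin N) (a : G), (∏ k, F ((Pi.mulSingle i a : Fin N → G) k)) = F a := by
    intro i a
    refine (Fintype.prod_eq_single i ?_).trans (by rw [Pi.mulSingle_eq_same])
    intro k hk
    rw [Pi.mulSingle_eq_of_ne hk, map_one]
  have memE : ∀ f : Fin N → G, (∏ i, F (f i)) = 1 → SemidirectProduct.inl f ∈ H :=
    fun f hf => (hH' _).2 hf
  have memP : ∀ σ : Equiv.Perm (Fin N), SemidirectProduct.inr σ ∈ H :=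
    fun σ => (hH' _).2 (by simp [SemidirectProduct.left_inr])
  have hFof : ∀ f : Fin N → G, (∏ i, Abelianization.of (f i)) = 1 → (∏ i, F (f i)) = 1 := by
    intro f hf
    have : (∏ i, F (f i)) = QuotientGroup.mk' T (∏ i, Abelianization.of (f i)) := by
      rw [map_prod]; rfl
    rw [this, hf, map_one]
  -- surjectivity
  have ψapp : ∀ (x : Wr G N) (hx : x ∈ H), ψ ⟨x, hx⟩ =
      (⟨prodAb G N x, hmemT ⟨x, hx⟩⟩, signHom2 (Equiv.Perm.sign x.right)) :=
    fun x hx => rfl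
  have hsurj : Function.Surjective ψ := by
    rintro ⟨t, z⟩
    obtain ⟨g, hg⟩ := QuotientGroup.mk_surjective (t : Abelianization G)
    have hg' : Abelianization.of g = (t : Abelianization G) := hg
    have hw1 : SemidirectProduct.inl (Pi.mulSingle i0 g : Fin N → G) ∈ H := by
      refine memE _ ?_
      rw [hFsingle]
      show QuotientGroup.mk' T (Abelianization.of g) = 1
      rw [hg']
      exact (QuotientGroup.eq_one_iff _).2 t.2
    have e1 : ψ ⟨_, hw1⟩ = (t, 1) := by
      rw [ψapp]
      refine Prod.ext (Subtype.ext ?_) ?_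
      · show prodAb G N (SemidirectProduct.inl (Pi.mulSingle i0 g : Fin N → G)) =
          (t : Abelianization G)
        rw [prodAb_inl, hofsingle, hg']
      · show signHom2 (Equiv.Perm.sign
          (SemidirectProduct.inl (Pi.mulSingle i0 g : Fin N → G)).right) = 1
        rw [SemidirectProduct.right_inl, map_one, map_one]
    have e2 : ψ ⟨_, memP (Equiv.swap i0 i1)⟩ = (1, Multiplicative.ofAdd 1) := by
      rw [ψapp]
      refine Prod.ext (Subtype.ext ?_) ?_
      · exact prodAb_inr _
      · show signHom2 (Equiv.Perm.sign
          (SemidirectProduct.inr (Equiv.swap i0 i1) : Wr G N).right) = Multiplicative.ofAdd 1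
        rw [SemidirectProduct.right_inr, Equiv.Perm.sign_swap h01, signHom2_neg_one]
    rcases multZMod2_cases z with rfl | rfl
    · exact ⟨⟨_, hw1⟩, by rw [e1]⟩
    · refine ⟨⟨_, hw1⟩ * ⟨_, memP (Equiv.swap i0 i1)⟩, ?_⟩
      rw [map_mul, e1, e2, Prod.mk_mul_mk, mul_one, one_mul]
  set q : H →* Abelianization H := Abelianization.of with hq
  have hqcomm : ∀ u v : H, q ⁅u, v⁆ = 1 := fun u v =>
    MonoidHom.mem_ker.1 (Abelianization.commutator_subset_ker q
      (Subgroup.commutator_mem_commutator (Subgroup.mem_top u) (Subgroup.mem_top v)))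
  have hqconj : ∀ u v : H, q (u * v * u⁻¹) = q v := by
    intro u v
    calc q (u * v * u⁻¹) = q u * q v * (q u)⁻¹ := by rw [map_mul, map_mul, map_inv]
    _ = q v := by rw [mul_comm (q u) (q v), mul_assoc, mul_inv_cancel, mul_one]
  set Pm : Equiv.Perm (Fin N) →* H := MonoidHom.codRestrict (SemidirectProduct.inr) H memP
    with hPm
  have hpairmem : ∀ (i j : Fin N) (a : G),
      SemidirectProduct.inl (Pi.mulSingle i a * Pi.mulSingle j a⁻¹ : Fin N → G) ∈ H := by
    intro i j a
    refine memE _ ?_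
    have h1 : ∀ k, F ((Pi.mulSingle i a * Pi.mulSingle j a⁻¹ : Fin N → G) k) =
        F ((Pi.mulSingle i a : Fin N → G) k) * F ((Pi.mulSingle j a⁻¹ : Fin N → G) k) := by
      intro k; rw [Pi.mul_apply, map_mul]
    rw [Finset.prod_congr rfl fun k _ => h1 k, Finset.prod_mul_distrib, hFsingle, hFsingle,
      map_inv, mul_inv_cancel]
  have hthird : ∀ i j : Fin N, ∃ k : Fin N, k ≠ i ∧ k ≠ j := by
    intro i j
    by_contra hcon
    push_neg at hcon
    have hsub : (Finset.univ : Finset (Fin N)) ⊆ {i, j} := by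
      intro k _
      rcases eq_or_ne k i with rfl | hk
      · simp
      · simp [hcon k hk]
    have hc := Finset.card_le_card hsub
    rw [Finset.card_univ, Fintype.card_fin] at hc
    have h2 : ({i, j} : Finset (Fin N)).card ≤ 2 :=
      le_trans (Finset.card_insert_le _ _) (by simp)
    omega
  have hcommval : ∀ (f : Fin N → G) (τ : Equiv.Perm (Fin N)),
      (SemidirectProduct.inl f * SemidirectProduct.inr τ * (SemidirectProduct.inl f)⁻¹ *
        (SemidirectProduct.inr τ)⁻¹ : Wr G N) =
        SemidirectProduct.inl (f * (permAut G N τ) f⁻¹) := by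
    intro f τ
    have h1 : (SemidirectProduct.inr τ * SemidirectProduct.inl f⁻¹ *
        SemidirectProduct.inr τ⁻¹ : Wr G N) =
        SemidirectProduct.inl ((permAut G N τ) f⁻¹) := (SemidirectProduct.inl_aut τ f⁻¹).symm
    calc (SemidirectProduct.inl f * SemidirectProduct.inr τ * (SemidirectProduct.inl f)⁻¹ *
        (SemidirectProduct.inr τ)⁻¹ : Wr G N)
        = SemidirectProduct.inl f * (SemidirectProduct.inr τ * SemidirectProduct.inl f⁻¹ *
          SemidirectProduct.inr τ⁻¹) := by simp only [map_inv]; group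
      _ = SemidirectProduct.inl f * SemidirectProduct.inl ((permAut G N τ) f⁻¹) := by rw [h1]
      _ = SemidirectProduct.inl (f * (permAut G N τ) f⁻¹) := by rw [map_mul]
  have hpair : ∀ (i j : Fin N), i ≠ j → ∀ a : G,
      q ⟨SemidirectProduct.inl (Pi.mulSingle i a * Pi.mulSingle j a⁻¹ : Fin N → G),
        hpairmem i j a⟩ = 1 := by
    intro i j hij a
    obtain ⟨k, hki, hkj⟩ := hthird i j
    set τ := Equiv.swap i j with hτ
    set gg : Fin N → G := Pi.mulSingle k a * Pi.mulSingle j a⁻¹ with hgg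
    have hfun : gg * (permAut G N τ) gg⁻¹ =
        (Pi.mulSingle i a * Pi.mulSingle j a⁻¹ : Fin N → G) := by
      funext x
      have happ : (permAut G N τ) gg⁻¹ x = (gg (τ x))⁻¹ := by
        show gg⁻¹ (τ.symm x) = _
        rw [hτ, Equiv.symm_swap, Pi.inv_apply]
      rw [Pi.mul_apply, happ]
      rcases eq_or_ne x i with rfl | hxi
      · rw [hτ, Equiv.swap_apply_left]
        simp [hgg, Pi.mulSingle_eq_same, Pi.mulSingle_eq_of_ne, hki.symm, hkj.symm, hij]
      rcases eq_or_ne x j with rfl | hxj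
      · rw [hτ, Equiv.swap_apply_right]
        simp [hgg, Pi.mulSingle_eq_same, Pi.mulSingle_eq_of_ne, hki.symm, hkj.symm, hij.symm]
      · rw [hτ, Equiv.swap_apply_of_ne_of_ne hxi hxj]
        rcases eq_or_ne x k with rfl | hxk
        · simp [hgg, Pi.mulSingle_eq_same, Pi.mulSingle_eq_of_ne, hkj, hxi, hxj]
        · simp [hgg, Pi.mulSingle_eq_same, Pi.mulSingle_eq_of_ne, hxi, hxj, hxk]
    have key : ⁅(⟨SemidirectProduct.inl gg, hpairmem k j a⟩ : H), Pm τ⁆ =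
        (⟨SemidirectProduct.inl (Pi.mulSingle i a * Pi.mulSingle j a⁻¹ : Fin N → G),
          hpairmem i j a⟩ : H) := by
      apply Subtype.ext
      show (SemidirectProduct.inl gg * SemidirectProduct.inr τ *
          (SemidirectProduct.inl gg)⁻¹ * (SemidirectProduct.inr τ)⁻¹ : Wr G N) =
        SemidirectProduct.inl (Pi.mulSingle i a * Pi.mulSingle j a⁻¹ : Fin N → G)
      rw [hcommval, hfun]
    rw [← key]
    exact hqcomm _ _
  have hPswap : ∀ x y : Fin N, x ≠ y → q (Pm (Equiv.swap x y)) = q (Pm (Equiv.swap i0 i1)) := by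
    intro x y hxy
    obtain ⟨c, hc⟩ := isConj_iff.1 (Equiv.Perm.isConj_swap hxy h01)
    calc q (Pm (Equiv.swap x y)) = q (Pm c * Pm (Equiv.swap x y) * (Pm c)⁻¹) :=
          (hqconj _ _).symm
      _ = q (Pm (Equiv.swap i0 i1)) := by rw [← map_inv, ← map_mul, ← map_mul, hc]
  have ht2 : q (Pm (Equiv.swap i0 i1)) * q (Pm (Equiv.swap i0 i1)) = 1 := by
    rw [← map_mul, ← map_mul, Equiv.swap_mul_self, map_one, map_one]
  have heven : ∀ σ : Equiv.Perm (Fin N), Equiv.Perm.sign σ = 1 → q (Pm σ) = 1 := by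
    have hgen : ∀ σ : Equiv.Perm (Fin N),
        q (Pm σ) = if Equiv.Perm.sign σ = 1 then 1 else q (Pm (Equiv.swap i0 i1)) := by
      intro σ
      refine Equiv.Perm.swap_induction_on σ ?_ ?_
      · simp
      · intro f x y hxy ih
        rw [map_mul, map_mul, ih, hPswap x y hxy, Equiv.Perm.sign_mul,
          Equiv.Perm.sign_swap hxy]
        rcases Int.units_eq_one_or (Equiv.Perm.sign f) with hs | hs <;> rw [hs]
        · rw [if_pos rfl, if_neg (by decide), mul_one]
        · rw [if_neg (by decide), if_pos (by decide)]
          exact ht2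
    intro σ hσ
    rw [hgen σ, if_pos hσ]
  have hofker : ∀ g : G, Abelianization.of g = 1 → g ∈ commutator G := fun g h =>
    (QuotientGroup.eq_one_iff g).1 h
  have hFker : ∀ g : G, g ∈ commutator G → F g = 1 := fun g h =>
    MonoidHom.mem_ker.1 (Abelianization.commutator_subset_ker F h)
  have hsingmem : ∀ p : G, F p = 1 →
      SemidirectProduct.inl (Pi.mulSingle i0 p : Fin N → G) ∈ H :=
    fun p hp => memE _ (by rw [hFsingle]; exact hp)
  have hD : ∀ p : G, p ∈ commutator G →
      ∀ h : SemidirectProduct.inl (Pi.mulSingle i0 p : Fin N → G) ∈ H,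
        q ⟨SemidirectProduct.inl (Pi.mulSingle i0 p : Fin N → G), h⟩ = 1 := by
    intro p hp
    rw [commutator_eq_closure] at hp
    refine Subgroup.closure_induction ?_ ?_ ?_ ?_ hp
    · rintro x ⟨a, b, rfl⟩ h
      set g1 : Fin N → G := Pi.mulSingle i0 a * Pi.mulSingle i1 a⁻¹ with hg1
      set g2 : Fin N → G := Pi.mulSingle i0 b * Pi.mulSingle i2 b⁻¹ with hg2
      set u : H := ⟨SemidirectProduct.inl g1, hpairmem i0 i1 a⟩ with hu
      set v : H := ⟨SemidirectProduct.inl g2, hpairmem i0 i2 b⟩ with hv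
      have key : ⁅u, v⁆ = (⟨SemidirectProduct.inl (Pi.mulSingle i0 ⁅a, b⁆ : Fin N → G), h⟩ : H) := by
        apply Subtype.ext
        show (SemidirectProduct.inl g1 * SemidirectProduct.inl g2 *
            (SemidirectProduct.inl g1)⁻¹ * (SemidirectProduct.inl g2)⁻¹ : Wr G N) =
          SemidirectProduct.inl (Pi.mulSingle i0 ⁅a, b⁆ : Fin N → G)
        rw [← map_inv, ← map_inv, ← map_mul, ← map_mul, ← map_mul]
        congr 1
        funext x
        simp only [hg1, hg2, Pi.mul_apply, Pi.inv_apply, commutatorElement_def]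
        rcases eq_or_ne x i0 with rfl | hx0
        · simp [Pi.mulSingle_eq_same, Pi.mulSingle_eq_of_ne, h01.symm, h02.symm]
        rcases eq_or_ne x i1 with rfl | hx1
        · simp [Pi.mulSingle_eq_same, Pi.mulSingle_eq_of_ne, h01, h12]
        rcases eq_or_ne x i2 with rfl | hx2
        · simp [Pi.mulSingle_eq_same, Pi.mulSingle_eq_of_ne, h02, h12.symm]
        · simp [Pi.mulSingle_eq_of_ne, hx0, hx1, hx2]
      rw [← key]
      exact hqcomm u v
    · intro h
      have h1 : (⟨SemidirectProduct.inl (Pi.mulSingle i0 (1 : G) : Fin N → G), h⟩ : H) = 1 :=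
        Subtype.ext (by
          show SemidirectProduct.inl (Pi.mulSingle i0 (1 : G) : Fin N → G) = 1
          rw [Pi.mulSingle_one, map_one])
      rw [h1, map_one]
    · intro x y hx hy ihx ihy h
      have hxc : x ∈ commutator G := by rwa [commutator_eq_closure]
      have hyc : y ∈ commutator G := by rwa [commutator_eq_closure]
      have hx' := hsingmem x (hFker x hxc)
      have hy' := hsingmem y (hFker y hyc)
      have h1 : (⟨SemidirectProduct.inl (Pi.mulSingle i0 (x * y) : Fin N → G), h⟩ : H) =
          ⟨SemidirectProduct.inl (Pi.mulSingle i0 x : Fin N → G), hx'⟩ *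
          ⟨SemidirectProduct.inl (Pi.mulSingle i0 y : Fin N → G), hy'⟩ :=
        Subtype.ext (by
          show SemidirectProduct.inl (Pi.mulSingle i0 (x * y) : Fin N → G) =
            SemidirectProduct.inl (Pi.mulSingle i0 x : Fin N → G) *
            SemidirectProduct.inl (Pi.mulSingle i0 y : Fin N → G)
          rw [← map_mul, Pi.mulSingle_mul])
      rw [h1, map_mul, ihx hx', ihy hy', mul_one]
    · intro x hx ihx h
      have hxc : x ∈ commutator G := by rwa [commutator_eq_closure]
      have hx' := hsingmem x (hFker x hxc)
      have h1 : (⟨SemidirectProduct.inl (Pi.mulSingle i0 x⁻¹ : Fin N → G), h⟩ : H) =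
          (⟨SemidirectProduct.inl (Pi.mulSingle i0 x : Fin N → G), hx'⟩ : H)⁻¹ :=
        Subtype.ext (by
          show SemidirectProduct.inl (Pi.mulSingle i0 x⁻¹ : Fin N → G) =
            (SemidirectProduct.inl (Pi.mulSingle i0 x : Fin N → G))⁻¹
          rw [← map_inv, Pi.mulSingle_inv])
      rw [h1, map_inv, ihx hx', inv_one]
  have hred : ∀ (m : ℕ) (f : Fin N → G), (∀ i : Fin N, m ≤ (i : ℕ) → f i = 1) →
      (∏ i, Abelianization.of (f i)) = 1 →
      ∀ h : SemidirectProduct.inl f ∈ H, q ⟨SemidirectProduct.inl f, h⟩ = 1 := by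
    intro m
    induction m with
    | zero =>
      intro f hsupp hprod h
      have hf1 : f = 1 := funext fun i => hsupp i (Nat.zero_le _)
      subst hf1
      have h1 : (⟨SemidirectProduct.inl (1 : Fin N → G), h⟩ : H) = 1 :=
        Subtype.ext (by show SemidirectProduct.inl (1 : Fin N → G) = 1; rw [map_one])
      rw [h1, map_one]
    | succ m ih =>
      intro f hsupp hprod h
      rcases Nat.eq_zero_or_pos m with rfl | hm0
      · have hf : f = Pi.mulSingle i0 (f i0) := by
          funext x
          rcases eq_or_ne x i0 with rfl | hx
          · rw [Pi.mulSingle_eq_same]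
          · rw [Pi.mulSingle_eq_of_ne hx]
            refine hsupp x ?_
            have hvx : (x : ℕ) ≠ 0 := fun hc => hx (Fin.ext (by rw [hc, hv0]))
            omega
        have heq := Fintype.prod_eq_single (f := fun i => Abelianization.of (f i)) i0
          (fun k hk => by
            show Abelianization.of (f k) = 1
            rw [hf, Pi.mulSingle_eq_of_ne hk, map_one])
        rw [heq] at hprod
        have hc := hofker _ hprod
        have h2 : SemidirectProduct.inl (Pi.mulSingle i0 (f i0) : Fin N → G) ∈ H := by
          rw [← hf]; exact h
        have h3 : (⟨SemidirectProduct.inl f, h⟩ : H) =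
            ⟨SemidirectProduct.inl (Pi.mulSingle i0 (f i0) : Fin N → G), h2⟩ :=
          Subtype.ext (by
            show SemidirectProduct.inl f =
              SemidirectProduct.inl (Pi.mulSingle i0 (f i0) : Fin N → G)
            rw [← hf])
        rw [h3]
        exact hD _ hc h2
      · rcases Nat.lt_or_ge m N with hmN | hmN
        · set im : Fin N := ⟨m, hmN⟩ with him
          set ip : Fin N := ⟨m - 1, by omega⟩ with hip
          have hne : ip ≠ im := fun hc => by
            have hcv := congrArg Fin.val hc
            simp only [him, hip] at hcv
            omega
          set b := f im with hb
          set f' : Fin N → G := f * (Pi.mulSingle ip b * Pi.mulSingle im b⁻¹) with hf'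
          have hsupp' : ∀ i : Fin N, m ≤ (i : ℕ) → f' i = 1 := by
            intro i hi
            rcases eq_or_ne i im with rfl | him2
            · rw [hf', Pi.mul_apply, Pi.mul_apply, Pi.mulSingle_eq_of_ne hne.symm,
                Pi.mulSingle_eq_same, one_mul, ← hb, mul_inv_cancel]
            · have him3 : m + 1 ≤ (i : ℕ) := by
                have hvne : (i : ℕ) ≠ m := fun hc => him2 (Fin.ext (by rw [hc, him]))
                omega
              have hip2 : i ≠ ip := fun hc => by
                have hcv := congrArg Fin.val hc
                simp only [hip] at hcv
                omega
              rw [hf', Pi.mul_apply, Pi.mul_apply, hsupp i him3,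
                Pi.mulSingle_eq_of_ne hip2, Pi.mulSingle_eq_of_ne him2, one_mul, mul_one]
          have hprod' : (∏ i, Abelianization.of (f' i)) = 1 := by
            have hexp : ∀ i : Fin N, Abelianization.of (f' i) =
                Abelianization.of (f i) * (Abelianization.of ((Pi.mulSingle ip b : Fin N → G) i) *
                  Abelianization.of ((Pi.mulSingle im b⁻¹ : Fin N → G) i)) := by
              intro i
              rw [hf', Pi.mul_apply, Pi.mul_apply, map_mul, map_mul]
            rw [Finset.prod_congr rfl fun i _ => hexp i, Finset.prod_mul_distrib,
              Finset.prod_mul_distrib, hprod, hofsingle, hofsingle, map_inv, one_mul,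
              mul_inv_cancel]
          have h' : SemidirectProduct.inl f' ∈ H := memE f' (hFof f' hprod')
          have hkey : (⟨SemidirectProduct.inl f', h'⟩ : H) =
              ⟨SemidirectProduct.inl f, h⟩ *
              ⟨SemidirectProduct.inl (Pi.mulSingle ip b * Pi.mulSingle im b⁻¹ : Fin N → G),
                hpairmem ip im b⟩ :=
            Subtype.ext (by
              show SemidirectProduct.inl f' = SemidirectProduct.inl f *
                SemidirectProduct.inl (Pi.mulSingle ip b * Pi.mulSingle im b⁻¹ : Fin N → G)
              rw [hf', map_mul])
          have hq' := ih f' hsupp' hprod' h'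
          rw [hkey, map_mul, hpair ip im hne b, mul_one] at hq'
          exact hq'
        · exact ih f (fun i hi => absurd hi (by have := i.isLt; omega)) hprod h
  -- the kernel of ψ is the commutator subgroup
  have hker : ψ.ker = commutator ↥H := by
    refine le_antisymm ?_ (Abelianization.commutator_subset_ker ψ)
    intro x hx
    rw [MonoidHom.mem_ker] at hx
    have hx1 : prodAb G N (x : Wr G N) = 1 :=
      congrArg (fun p : T × Multiplicative (ZMod 2) => (p.1 : Abelianization G)) hx
    have hx2 : Equiv.Perm.sign (x : Wr G N).right = 1 :=
      (signHom2_eq_one_iff _).1 (congrArg Prod.snd hx)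
    set f := (x : Wr G N).left with hfdef
    set σ := (x : Wr G N).right with hσdef
    have hσH : SemidirectProduct.inr σ ∈ H := memP σ
    have hfH : SemidirectProduct.inl f ∈ H := by
      have hxd : SemidirectProduct.inl f = (x : Wr G N) * (SemidirectProduct.inr σ)⁻¹ := by
        rw [← SemidirectProduct.inl_left_mul_inr_right (x : Wr G N), mul_inv_cancel_right]
      rw [hxd]
      exact H.mul_mem x.2 (H.inv_mem hσH)
    have hdecomp : x = (⟨SemidirectProduct.inl f, hfH⟩ : H) * ⟨SemidirectProduct.inr σ, hσH⟩ := by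
      apply Subtype.ext
      show (x : Wr G N) = SemidirectProduct.inl f * SemidirectProduct.inr σ
      exact (SemidirectProduct.inl_left_mul_inr_right _).symm
    have hprodf : (∏ i, Abelianization.of (f i)) = 1 := hx1
    have hqf := hred N f (fun i hi => absurd hi (by have := i.isLt; omega)) hprodf hfH
    have hqσ : q ⟨SemidirectProduct.inr σ, hσH⟩ = 1 := heven σ hx2
    have hqx : q x = 1 := by rw [hdecomp, map_mul, hqf, hqσ, one_mul]
    exact (QuotientGroup.eq_one_iff x).1 hqx
  exact ⟨(QuotientGroup.quotientMulEquivOfEq hker.symm).trans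
    (QuotientGroup.quotientKerEquivOfSurjective ψ hsurj)⟩
end

section
/- Let G be a group, N ≥ 3, and consider the subgroup K = {(g_1,...,g_N; σ) ∈ G^N ⋊ A_N : g_1⋯g_N ∈ [G,G]}. Then K contains all commutators [(g; σ), (h; τ)] of elements of G^N ⋊ Σ_N; in particular K is normal in G^N ⋊ Σ_N and the quotient (G^N ⋊ Σ_N)/K is abelian. -/
open scoped commutatorElement

/-- The map sending `(g;σ)` to the image of `g_1 ⋯ g_N` in the abelianization of `G`
is a group homomorphism. -/
def toAb (G : Type*) [Group G] (N : ℕ) : Wr G N →* Abelianization G where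
  toFun x := ∏ i, Abelianization.of (x.left i)
  map_one' := by simp
  map_mul' x y := by
    have h : ∀ i, (x * y).left i = x.left i * y.left (x.right.symm i) := fun i => rfl
    simp only [h, map_mul, Finset.prod_mul_distrib]
    congr 1
    exact Equiv.prod_comp x.right.symm fun i => Abelianization.of (y.left i)

theorem mem_commutator_iff_ab {G : Type*} [Group G] (g : G) :
    g ∈ commutator G ↔ Abelianization.of g = 1 :=
  (QuotientGroup.eq_one_iff g).symm

/-- For `N ≥ 3`, the subgroup `K = {(g;σ) ∈ G^N ⋊ A_N : g_1 ⋯ g_N ∈ [G,G]}` contains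
all commutators of `G^N ⋊ Σ_N`; in particular it is normal and the quotient is
abelian (i.e. `K` contains the commutator subgroup). -/
theorem stmt5 (G : Type*) [Group G] (N : ℕ) (hN : 3 ≤ N)
    (K : Subgroup (Wr G N))
    (hK : ∀ x : Wr G N, x ∈ K ↔
      x.right ∈ alternatingGroup (Fin N) ∧ (List.ofFn x.left).prod ∈ commutator G) :
    (∀ a b : Wr G N, ⁅a, b⁆ ∈ K) ∧ K.Normal ∧ commutator (Wr G N) ≤ K := by
  have h1 : ∀ a b : Wr G N, ⁅a, b⁆ ∈ K := by
    intro a b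
    rw [hK]
    constructor
    · rw [Equiv.Perm.mem_alternatingGroup,
        show (⁅a, b⁆ : Wr G N).right = ⁅a.right, b.right⁆ from
          map_commutatorElement SemidirectProduct.rightHom a b,
        map_commutatorElement]
      exact commutatorElement_eq_one_iff_mul_comm.mpr (mul_comm _ _)
    · rw [mem_commutator_iff_ab, map_list_prod, List.map_ofFn, List.prod_ofFn]
      show toAb G N ⁅a, b⁆ = 1
      rw [map_commutatorElement]
      exact commutatorElement_eq_one_iff_mul_comm.mpr (mul_comm _ _)
  refine ⟨h1, ⟨fun n hn g => ?_⟩, ?_⟩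
  · have : g * n * g⁻¹ = ⁅g, n⁆ * n := by group
    rw [this]
    exact K.mul_mem (h1 g n) hn
  · rw [commutator_def]
    exact Subgroup.commutator_le.mpr fun a _ b _ => h1 a b
end
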